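/- Let X and Y be complex Banach spaces with X nonzero, and suppose Y has the bounded approximation property. If K(X,Y) is complemented in its bidual, then there exists a continuous projection from L(X,Y) onto K(X,Y). -/

import Mathlib

open Filter Topology NormedSpace
open scoped ENNReal

noncomputable section

/-- `ℓ∞` : the Banach space of bounded complex sequences with the sup norm. -/
abbrev LinftySeq : Type := ↥(lp (fun _ : ℕ => ℂ) ∞)

/-- The predicate on `ℓ∞` of belonging to `c₀` (i.e. tending to zero). -/
def IsC0 (α : LinftySeq) : Prop := Tendsto (fun k => α k) atTop (𝓝 (0 : ℂ))

/-- `c₀` as a (closed) submodule of `ℓ∞`, with the induced sup norm. -/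
def c0 : Submodule ℂ LinftySeq where
  carrier := {α | IsC0 α}
  add_mem' := by
    intro a b ha hb
    have := ha.add hb
    simpa [IsC0, lp.coeFn_add] using this
  zero_mem' := by
    simp only [Set.mem_setOf_eq, IsC0, lp.coeFn_zero, Pi.zero_apply]
    exact tendsto_const_nhds
  smul_mem' := by
    intro c a ha
    have := ha.const_mul c
    simpa [IsC0, lp.coeFn_smul, smul_eq_mul] using this

/-- The subspace `K(X,Y)` of compact operators inside `L(X,Y)`. -/
abbrev KOp (X Y : Type*) [NormedAddCommGroup X] [NormedSpace ℂ X]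
    [NormedAddCommGroup Y] [NormedSpace ℂ Y] : Submodule ℂ (X →L[ℂ] Y) :=
  compactOperator (RingHom.id ℂ) X Y

instance KOp.instNormedAddCommGroup (X Y : Type*) [NormedAddCommGroup X] [NormedSpace ℂ X]
    [NormedAddCommGroup Y] [NormedSpace ℂ Y] : NormedAddCommGroup ↥(KOp X Y) :=
  Submodule.normedAddCommGroup _

instance KOp.instNormedSpace (X Y : Type*) [NormedAddCommGroup X] [NormedSpace ℂ X]
    [NormedAddCommGroup Y] [NormedSpace ℂ Y] : NormedSpace ℂ ↥(KOp X Y) :=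
  Submodule.normedSpace _

/-- The canonical basis vector `e k` of `c₀`. -/
def eSeq (k : ℕ) : ↥c0 :=
  ⟨lp.single ∞ k (1 : ℂ), by
    have h : ∀ᶠ j in atTop, (lp.single ∞ k (1 : ℂ) : ∀ _ : ℕ, ℂ) j = 0 := by
      filter_upwards [eventually_gt_atTop k] with j hj
      exact lp.single_apply_ne ∞ k _ (by omega)
    exact Tendsto.congr' (h.mono fun j hj => hj.symm) tendsto_const_nhds⟩

/-- The bounded approximation property. -/
def HasBAP (E : Type*) [NormedAddCommGroup E] [NormedSpace ℂ E] : Prop :=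
  ∃ lam : ℝ, 1 ≤ lam ∧ ∀ K : Set E, IsCompact K → ∀ ε : ℝ, 0 < ε →
    ∃ V : E →L[ℂ] E, FiniteDimensional ℂ ↥(LinearMap.range (V : E →ₗ[ℂ] E)) ∧ ‖V‖ ≤ lam ∧
      ∀ x ∈ K, ‖V x - x‖ ≤ ε

/-- Finite-rank continuous linear maps are compact operators. -/
lemma isCompactOperator_of_finiteRank {X Y : Type*} [NormedAddCommGroup X] [NormedSpace ℂ X]
    [NormedAddCommGroup Y] [NormedSpace ℂ Y] (V : X →L[ℂ] Y)
    (h : FiniteDimensional ℂ ↥(LinearMap.range (V : X →ₗ[ℂ] Y))) : IsCompactOperator ⇑V := by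
  haveI := h
  refine ⟨Subtype.val '' (Metric.closedBall (0 : ↥(LinearMap.range (V : X →ₗ[ℂ] Y))) ‖V‖), ?_, ?_⟩
  · exact ((isCompact_closedBall _ _).image continuous_subtype_val)
  · refine Filter.mem_of_superset (Metric.closedBall_mem_nhds (0 : X) one_pos) ?_
    intro x hx
    refine ⟨⟨V x, LinearMap.mem_range_self _ x⟩, ?_, rfl⟩
    simp only [Metric.mem_closedBall, dist_zero_right]
    calc ‖(⟨V x, _⟩ : ↥(LinearMap.range (V : X →ₗ[ℂ] Y)))‖ = ‖V x‖ := rfl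
      _ ≤ ‖V‖ * ‖x‖ := V.le_opNorm x
      _ ≤ ‖V‖ * 1 := mul_le_mul_of_nonneg_left (by simpa using hx) (norm_nonneg V)
      _ = ‖V‖ := mul_one _

/-- Bounded functions into ℂ converge along an ultrafilter. -/
lemma tendsto_limUnder_of_bounded {I : Type*} (U : Ultrafilter I) (f : I → ℂ) (C : ℝ)
    (hf : ∀ i, ‖f i‖ ≤ C) : Tendsto f ↑U (𝓝 (limUnder ↑U f)) := by
  have hle : ↑(U.map f) ≤ 𝓟 (Metric.closedBall (0 : ℂ) C) := by
    rw [Filter.le_principal_iff]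
    have : f ⁻¹' (Metric.closedBall (0 : ℂ) C) = Set.univ := by
      ext i; simp [Metric.mem_closedBall, dist_zero_right]; exact hf i
    exact Filter.mem_map.mpr (this ▸ Filter.univ_mem)
  obtain ⟨a, -, ha⟩ := (isCompact_closedBall (0 : ℂ) C).ultrafilter_le_nhds (U.map f) hle
  exact tendsto_nhds_limUnder ⟨a, ha⟩

/-- Directed index set for BAP nets. -/
structure BAPIndex (Y : Type*) [NormedAddCommGroup Y] where
  K : Set Y
  eps : ℝ
  hK : IsCompact K
  heps : 0 < eps

instance (Y : Type*) [NormedAddCommGroup Y] : SemilatticeSup (BAPIndex Y) where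
  le i j := i.K ⊆ j.K ∧ j.eps ≤ i.eps
  le_refl i := ⟨subset_rfl, le_rfl⟩
  le_trans i j k hij hjk := ⟨hij.1.trans hjk.1, hjk.2.trans hij.2⟩
  le_antisymm i j hij hji := by
    cases i; cases j
    simp only [BAPIndex.mk.injEq]
    exact ⟨subset_antisymm hij.1 hji.1, le_antisymm hji.2 hij.2⟩
  sup i j := ⟨i.K ∪ j.K, min i.eps j.eps, i.hK.union j.hK, lt_min i.heps j.heps⟩
  le_sup_left i j := ⟨Set.subset_union_left, min_le_left _ _⟩
  le_sup_right i j := ⟨Set.subset_union_right, min_le_right _ _⟩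
  sup_le i j k hik hjk := ⟨Set.union_subset hik.1 hjk.1, le_min hik.2 hjk.2⟩

instance (Y : Type*) [NormedAddCommGroup Y] : Nonempty (BAPIndex Y) :=
  ⟨⟨∅, 1, isCompact_empty, one_pos⟩⟩


set_option maxHeartbeats 1000000 in
theorem stmt11 (X Y : Type*) [NormedAddCommGroup X] [NormedSpace ℂ X] [CompleteSpace X]
    [NormedAddCommGroup Y] [NormedSpace ℂ Y] [CompleteSpace Y] [Nontrivial X]
    (hY : HasBAP Y)
    (hK : ∃ Q : StrongDual ℂ (StrongDual ℂ ↥(KOp X Y)) →L[ℂ] ↥(KOp X Y),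
        ∀ S : ↥(KOp X Y), Q (inclusionInDoubleDual ℂ ↥(KOp X Y) S) = S) :
    ∃ P : (X →L[ℂ] Y) →L[ℂ] (X →L[ℂ] Y), (∀ T, P (P T) = P T) ∧
      Set.range P = {T : X →L[ℂ] Y | IsCompactOperator ⇑T} := by
  classical
  obtain ⟨lam, hlam, hB⟩ := hY
  obtain ⟨Q, hQ⟩ := hK
  choose V hVfin hVnorm hVapp using fun i : BAPIndex Y => hB i.K i.hK i.eps i.heps
  have hlam0 : (0:ℝ) ≤ lam := zero_le_one.trans hlam
  set U : Ultrafilter (BAPIndex Y) := Ultrafilter.of atTop with hUdef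
  have hUle : (↑U : Filter (BAPIndex Y)) ≤ atTop := Ultrafilter.of_le _
  have hgmem : ∀ (T : X →L[ℂ] Y) (i : BAPIndex Y), (V i).comp T ∈ KOp X Y := fun T i =>
    (isCompactOperator_of_finiteRank (V i) (hVfin i)).comp_clm T
  set g : (X →L[ℂ] Y) → BAPIndex Y → ↥(KOp X Y) :=
    (fun T i => ⟨(V i).comp T, hgmem T i⟩) with hgdef
  have hgnorm : ∀ T i, ‖g T i‖ ≤ lam * ‖T‖ := by
    intro T i
    calc ‖g T i‖ = ‖(V i).comp T‖ := rfl
      _ ≤ ‖V i‖ * ‖T‖ := ContinuousLinearMap.opNorm_comp_le _ _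
      _ ≤ lam * ‖T‖ := mul_le_mul_of_nonneg_right (hVnorm i) (norm_nonneg T)
  have hbound : ∀ (T : X →L[ℂ] Y) (φ : StrongDual ℂ ↥(KOp X Y)) (i : BAPIndex Y),
      ‖φ (g T i)‖ ≤ ‖φ‖ * (lam * ‖T‖) := fun T φ i =>
    (φ.le_opNorm _).trans (mul_le_mul_of_nonneg_left (hgnorm T i) (norm_nonneg φ))
  have hconv : ∀ (T : X →L[ℂ] Y) (φ : StrongDual ℂ ↥(KOp X Y)),
      Tendsto (fun i => φ (g T i)) ↑U (𝓝 (limUnder ↑U fun i => φ (g T i))) :=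
    fun T φ => tendsto_limUnder_of_bounded U _ _ (hbound T φ)
  -- the net converges in norm on compact operators
  have hnet : ∀ S : ↥(KOp X Y), Tendsto (fun i => g (↑S : X →L[ℂ] Y) i) atTop (𝓝 S) := by
    intro S
    rw [Metric.tendsto_atTop]
    intro ε hε
    obtain ⟨K0, hK0, hK0nhds⟩ := S.2
    obtain ⟨r, hr, hball⟩ := Metric.mem_nhds_iff.mp hK0nhds
    set δ : ℝ := r/2 with hδdef
    have hδ0 : 0 < δ := by positivity
    refine ⟨⟨K0, δ * ε / 2, hK0, by positivity⟩, ?_⟩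
    intro i hi
    have hpt : ∀ x : X, ‖V i ((S : X →L[ℂ] Y) x) - (S : X →L[ℂ] Y) x‖ ≤ (ε/2) * ‖x‖ := by
      intro x
      rcases eq_or_ne x 0 with rfl | hx
      · simp
      · have hxn : 0 < ‖x‖ := norm_pos_iff.mpr hx
        set u : X := ((δ / ‖x‖ : ℝ) : ℂ) • x with hu
        have hun : ‖u‖ = δ := by
          rw [hu, norm_smul, Complex.norm_real, Real.norm_eq_abs,
            abs_of_pos (div_pos hδ0 hxn)]
          field_simp
        have humem : (S : X →L[ℂ] Y) u ∈ K0 := hball (by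
          rw [Metric.mem_ball, dist_zero_right, hun]; linarith)
        have happ := hVapp i _ (hi.1 humem)
        have heps : i.eps ≤ δ * ε / 2 := hi.2
        have hmul : ((‖x‖ / δ : ℝ) : ℂ) * ((δ / ‖x‖ : ℝ) : ℂ) = 1 := by
          rw [← Complex.ofReal_mul]
          rw [div_mul_div_comm, mul_comm, div_self (by positivity)]
          norm_num
        have hscale : ∀ (W : X →L[ℂ] Y), W x = ((‖x‖ / δ : ℝ) : ℂ) • W u := by
          intro W
          rw [hu, map_smul, smul_smul, hmul, one_smul]
        calc ‖V i ((S : X →L[ℂ] Y) x) - (S : X →L[ℂ] Y) x‖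
            = ‖((‖x‖ / δ : ℝ) : ℂ) • (V i ((S : X →L[ℂ] Y) u) - (S : X →L[ℂ] Y) u)‖ := by
              have h1 := hscale ((V i).comp (S : X →L[ℂ] Y))
              simp only [ContinuousLinearMap.comp_apply] at h1
              rw [smul_sub, h1, hscale (S : X →L[ℂ] Y)]
          _ = (‖x‖ / δ) * ‖V i ((S : X →L[ℂ] Y) u) - (S : X →L[ℂ] Y) u‖ := by
              rw [norm_smul, Complex.norm_real, Real.norm_eq_abs,
                abs_of_pos (div_pos hxn hδ0)]
          _ ≤ (‖x‖ / δ) * (δ * ε / 2) := by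
              exact mul_le_mul_of_nonneg_left (happ.trans heps) (by positivity)
          _ = (ε/2) * ‖x‖ := by field_simp
    have hdist : dist (g (↑S : X →L[ℂ] Y) i) S < ε := by
      rw [dist_eq_norm]
      have hcoe : ‖g (↑S : X →L[ℂ] Y) i - S‖ = ‖(V i).comp (↑S : X →L[ℂ] Y) - (↑S : X →L[ℂ] Y)‖ := rfl
      rw [hcoe]
      have := ContinuousLinearMap.opNorm_le_bound
        ((V i).comp (↑S : X →L[ℂ] Y) - (↑S : X →L[ℂ] Y)) (by positivity : (0:ℝ) ≤ ε/2)
        (fun x => by simpa using hpt x)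
      linarith
    exact hdist
  -- the double-dual-valued extension map
  let ψ : (X →L[ℂ] Y) → StrongDual ℂ (StrongDual ℂ ↥(KOp X Y)) := fun T =>
    LinearMap.mkContinuous
      { toFun := fun φ => limUnder ↑U fun i => φ (g T i)
        map_add' := fun φ₁ φ₂ => ((hconv T φ₁).add (hconv T φ₂)).limUnder_eq
        map_smul' := fun c φ => ((hconv T φ).const_mul c).limUnder_eq }
      (lam * ‖T‖)
      (fun φ => by
        have h1 := le_of_tendsto (hconv T φ).norm
          (Filter.Eventually.of_forall (hbound T φ))
        calc ‖limUnder ↑U fun i => φ (g T i)‖ ≤ ‖φ‖ * (lam * ‖T‖) := h1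
          _ = lam * ‖T‖ * ‖φ‖ := by ring)
  have hψ_apply : ∀ (T : X →L[ℂ] Y) (φ : StrongDual ℂ ↥(KOp X Y)),
      ψ T φ = limUnder ↑U fun i => φ (g T i) := fun T φ => rfl
  let Φlin : (X →L[ℂ] Y) →ₗ[ℂ] StrongDual ℂ (StrongDual ℂ ↥(KOp X Y)) :=
    { toFun := ψ
      map_add' := fun T₁ T₂ => by
        ext φ
        have h12 : ∀ i, g (T₁ + T₂) i = g T₁ i + g T₂ i := fun i =>
          Subtype.ext (by simp [hgdef, ContinuousLinearMap.comp_add])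
        have : ψ (T₁ + T₂) φ = limUnder ↑U fun i => φ (g T₁ i) + φ (g T₂ i) := by
          rw [hψ_apply]
          congr 1
          ext i
          rw [h12, map_add]
        rw [ContinuousLinearMap.add_apply, this, hψ_apply, hψ_apply]
        exact ((hconv T₁ φ).add (hconv T₂ φ)).limUnder_eq
      map_smul' := fun c T => by
        ext φ
        have h12 : ∀ i, g (c • T) i = c • g T i := fun i =>
          Subtype.ext (by
            show (V i).comp (c • T) = c • ((V i).comp T)
            ext x; simp)
        have : ψ (c • T) φ = limUnder ↑U fun i => c * φ (g T i) := by
          rw [hψ_apply]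
          congr 1
          ext i
          rw [h12, map_smul, smul_eq_mul]
        rw [RingHom.id_apply, ContinuousLinearMap.smul_apply, this, hψ_apply, smul_eq_mul]
        exact ((hconv T φ).const_mul c).limUnder_eq }
  let Φ : (X →L[ℂ] Y) →L[ℂ] StrongDual ℂ (StrongDual ℂ ↥(KOp X Y)) :=
    LinearMap.mkContinuous (F := StrongDual ℂ (StrongDual ℂ ↥(KOp X Y))) (𝕜₂ := ℂ) Φlin lam
      (fun T => by
        have hb : ∀ φ : StrongDual ℂ ↥(KOp X Y), ‖ψ T φ‖ ≤ lam * ‖T‖ * ‖φ‖ := fun φ => by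
          rw [hψ_apply]
          have h1 := le_of_tendsto (hconv T φ).norm
            (Filter.Eventually.of_forall (hbound T φ))
          calc ‖limUnder ↑U fun i => φ (g T i)‖ ≤ ‖φ‖ * (lam * ‖T‖) := h1
            _ = lam * ‖T‖ * ‖φ‖ := by ring
        exact ContinuousLinearMap.opNorm_le_bound (ψ T)
          (mul_nonneg hlam0 (norm_nonneg T)) hb)
  have hΦ_apply : ∀ (T : X →L[ℂ] Y) (φ : StrongDual ℂ ↥(KOp X Y)),
      Φ T φ = limUnder ↑U fun i => φ (g T i) := fun T φ => rfl
  have hΦS : ∀ S : ↥(KOp X Y), Φ (↑S : X →L[ℂ] Y) = inclusionInDoubleDual ℂ ↥(KOp X Y) S := by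
    intro S
    ext φ
    have hten : Tendsto (fun i => φ (g (↑S : X →L[ℂ] Y) i)) ↑U (𝓝 (φ S)) :=
      ((φ.continuous.tendsto S).comp (hnet S)).mono_left hUle
    calc Φ (↑S : X →L[ℂ] Y) φ = limUnder ↑U fun i => φ (g (↑S : X →L[ℂ] Y) i) := rfl
      _ = φ S := hten.limUnder_eq
      _ = inclusionInDoubleDual ℂ ↥(KOp X Y) S φ := (NormedSpace.dual_def ℂ _ S φ).symm
  let P : (X →L[ℂ] Y) →L[ℂ] (X →L[ℂ] Y) := ((KOp X Y).subtypeL).comp (Q.comp Φ)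
  have hPdef : ∀ T, P T = ((Q (Φ T) : ↥(KOp X Y)) : X →L[ℂ] Y) := fun T => rfl
  have hfix : ∀ S : ↥(KOp X Y), P (↑S : X →L[ℂ] Y) = (↑S : X →L[ℂ] Y) := by
    intro S
    rw [hPdef, hΦS, hQ]
  refine ⟨P, ?_, ?_⟩
  · intro T
    rw [hPdef T]
    exact hfix (Q (Φ T))
  · ext T
    constructor
    · rintro ⟨T₀, rfl⟩
      exact (Q (Φ T₀)).2
    · intro hT
      exact ⟨T, hfix ⟨T, hT⟩⟩
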